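/- Let g : ℝ → ℝ be g(θ) = (1+θ)/√(1+θ²), N ≥ 1 an integer, x ∈ ℝ, and u, v : Fin N → ℝ with values in [0,1]. Define h(c) = (∏_{l=1}^N g(u_l·c·v_l))·x. Then for every c ∈ [0,1], |h′(c)| ≤ (√2)^(N−1) · |x| · Σ_{i=1}^N u_i·v_i. -/

import Mathlib

/-!
By the product rule, `h'(c)` is `x` times a sum over `l` of `u l * v l * g' (θ l)` times the
other `N - 1` factors `g (θ j)`. Every factor satisfies `|g θ| ≤ √2`, because
`(1 + θ)² ≤ 2 (1 + θ²)`, and `g' θ = (1 - θ) / (1 + θ²)^(3/2)` has absolute value at most `1`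
for `θ ≥ 0`, which holds since `θ l = u l * c * v l` with all three factors nonnegative.
-/

noncomputable def g (θ : ℝ) : ℝ := (1 + θ) / Real.sqrt (1 + θ ^ 2)

open Finset Real

theorem abs_deriv_prod_le {ι : Type*} [Fintype ι] {f : ι → ℝ → ℝ} {f' a : ι → ℝ} {c M : ℝ}
    (hf : ∀ i, HasDerivAt (f i) (f' i) c) (hM : ∀ i, |f i c| ≤ M) (ha : ∀ i, |f' i| ≤ a i) :
    |deriv (fun t => ∏ i, f i t) c| ≤ M ^ (Fintype.card ι - 1) * ∑ i, a i := by
  classical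
  have hothers (i : ι) : |∏ j ∈ univ.erase i, f j c| ≤ M ^ (Fintype.card ι - 1) := calc
    |∏ j ∈ univ.erase i, f j c| = ∏ j ∈ univ.erase i, |f j c| := abs_prod _ _
    _ ≤ ∏ _j ∈ univ.erase i, M := prod_le_prod (fun j _ => abs_nonneg _) fun j _ => hM j
    _ = M ^ (Fintype.card ι - 1) := by rw [prod_const, card_erase_of_mem (mem_univ i), card_univ]
  rw [(HasDerivAt.fun_finsetProd fun i _ => hf i).deriv, mul_sum]
  refine (abs_sum_le_sum_abs _ _).trans (sum_le_sum fun i _ => ?_)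
  rw [smul_eq_mul, abs_mul]
  exact mul_le_mul (hothers i) (ha i) (abs_nonneg _) (pow_nonneg ((abs_nonneg _).trans (hM i)) _)

theorem hasDerivAt_g (θ : ℝ) :
    HasDerivAt g ((1 - θ) / ((1 + θ ^ 2) * √(1 + θ ^ 2))) θ := by
  have hpos : 0 < 1 + θ ^ 2 := by positivity
  have hsqrt : HasDerivAt (fun t => √(1 + t ^ 2)) (θ / √(1 + θ ^ 2)) θ := by
    convert ((hasDerivAt_pow 2 θ).const_add 1).sqrt hpos.ne' using 1
    field_simp
    ring
  refine (((hasDerivAt_id' θ).const_add 1).div hsqrt (sqrt_pos.2 hpos).ne').congr_deriv ?_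
  field_simp
  rw [sq_sqrt hpos.le]
  ring

theorem abs_g_le_sqrt_two (θ : ℝ) : |g θ| ≤ √2 := by
  have hpos : 0 < √(1 + θ ^ 2) := sqrt_pos.2 (by positivity)
  rw [g, abs_div, abs_of_pos hpos, div_le_iff₀ hpos, ← sqrt_mul zero_le_two, ← sqrt_sq_eq_abs]
  exact sqrt_le_sqrt (by nlinarith [sq_nonneg (1 - θ)])

theorem abs_deriv_g_le_one {θ : ℝ} (hθ : 0 ≤ θ) : |deriv g θ| ≤ 1 := by
  have hs : max 1 θ ≤ √(1 + θ ^ 2) :=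
    max_le (one_le_sqrt.2 (by nlinarith)) ((le_sqrt hθ (by positivity)).2 (by linarith))
  have hden : √(1 + θ ^ 2) ≤ (1 + θ ^ 2) * √(1 + θ ^ 2) :=
    le_mul_of_one_le_left (sqrt_nonneg _) (by nlinarith)
  rw [(hasDerivAt_g θ).deriv, abs_div, div_le_one (by positivity),
    abs_of_pos (by positivity : 0 < (1 + θ ^ 2) * √(1 + θ ^ 2))]
  have hnum : |1 - θ| ≤ max 1 θ :=
    abs_le.2 ⟨by linarith [le_max_right 1 θ], by linarith [le_max_left 1 θ]⟩
  exact hnum.trans (hs.trans hden)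

theorem hasDerivAt_g_mul_mul (a b c : ℝ) :
    HasDerivAt (fun t => g (a * t * b)) (a * b * deriv g (a * c * b)) c := by
  have hlin : HasDerivAt (fun t => a * t * b) (a * b) c := by
    simpa using ((hasDerivAt_id c).const_mul a).mul_const b
  simpa [Function.comp_def, mul_comm] using (hasDerivAt_g _).differentiableAt.hasDerivAt.comp c hlin

theorem deriv_central_bound_general (N : ℕ) (x : ℝ) (u v : Fin N → ℝ)
    (hu : ∀ l, u l ∈ Set.Icc (0 : ℝ) 1) (hv : ∀ l, v l ∈ Set.Icc (0 : ℝ) 1)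
    (c : ℝ) (hc : c ∈ Set.Icc (0 : ℝ) 1) :
    |deriv (fun c : ℝ => (∏ l, g (u l * c * v l)) * x) c| ≤
      Real.sqrt 2 ^ (N - 1) * |x| * ∑ i, u i * v i := by
  have hderiv (l : Fin N) := hasDerivAt_g_mul_mul (u l) (v l) c
  have huv (l : Fin N) : 0 ≤ u l * v l := mul_nonneg (hu l).1 (hv l).1
  have hslope (l : Fin N) : |u l * v l * deriv g (u l * c * v l)| ≤ u l * v l := by
    rw [abs_mul, abs_of_nonneg (huv l)]
    exact mul_le_of_le_one_right (huv l)
      (abs_deriv_g_le_one (mul_nonneg (mul_nonneg (hu l).1 hc.1) (hv l).1))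
  rw [deriv_mul_const (DifferentiableAt.fun_finsetProd fun l _ => (hderiv l).differentiableAt),
    abs_mul, mul_right_comm]
  gcongr
  simpa using abs_deriv_prod_le hderiv (fun l => abs_g_le_sqrt_two _) hslope

theorem deriv_central_bound (N : ℕ) (hN : 1 ≤ N) (x : ℝ) (u v : Fin N → ℝ)
    (hu : ∀ l, u l ∈ Set.Icc (0 : ℝ) 1) (hv : ∀ l, v l ∈ Set.Icc (0 : ℝ) 1)
    (c : ℝ) (hc : c ∈ Set.Icc (0 : ℝ) 1) :
    |deriv (fun c : ℝ => (∏ l, g (u l * c * v l)) * x) c| ≤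
      Real.sqrt 2 ^ (N - 1) * |x| * ∑ i, u i * v i :=
  deriv_central_bound_general N x u v hu hv c hc
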